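/- (Structural core of the transformation of a k-width junction tree into a k-th order cherry tree.) Let T be a junction tree on a finite vertex set V in which every cluster has at most k elements, and suppose |V| ≥ k. Then there exists a k-th order cherry tree T' on V such that every cluster of T is contained in some cluster of T'. -/

import Mathlib

/-- A junction tree on a finite vertex set `V`: a finite tree `tree` on a node set
`ι`, with a cluster `K t ⊆ V` at each node, such that the clusters cover `V` and
the junction property holds: for any nodes `s, t` and any node `u` on the (unique)
path between `s` and `t`, `K s ∩ K t ⊆ K u`. -/
structure JunctionTree (V : Type) [DecidableEq V] where
  ι : Type
  fin : Fintype ι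
  tree : SimpleGraph ι
  isTree : tree.IsTree
  K : ι → Finset V
  covers : ∀ v : V, ∃ t : ι, v ∈ K t
  junction : ∀ (s t u : ι) (p : tree.Walk s t), p.IsPath → u ∈ p.support →
    K s ∩ K t ⊆ K u

/-- The separator of an edge `{s, t}` of a junction tree is `K s ∩ K t`. -/
def JunctionTree.sep {V : Type} [DecidableEq V] (J : JunctionTree V) :
    Sym2 J.ι → Finset V :=
  Sym2.lift ⟨fun a b => J.K a ∩ J.K b, fun a b => Finset.inter_comm _ _⟩

/-- A `k`-th order cherry tree: a junction tree in which every cluster has exactly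
`k` elements and the separator of every edge has exactly `k - 1` elements. -/
def JunctionTree.IsCherry {V : Type} [DecidableEq V] (J : JunctionTree V)
    (k : ℕ) : Prop :=
  (∀ t : J.ι, (J.K t).card = k) ∧ ∀ e ∈ J.tree.edgeSet, (J.sep e).card = k - 1

/-!
Walking through the tree `J` and listing each node when it is first reached orders the clusters
so that each one meets the union of its predecessors inside a single earlier cluster (the running
intersection property): the node it was reached from separates it from everything seen before.
Putting the first `k` vertices, in order of first appearance, in front keeps this property and
makes the first cluster a `k`-set. The clusters are then absorbed one by one: the part already
seen lies in an earlier cherry cluster, and the new vertices are attached one at a time, each new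
cluster consisting of one new vertex and `k - 1` vertices of the cluster it is attached to.
Joining every cluster of the resulting sequence to its parent gives a tree, and the running
intersection property turns it into a junction tree.
-/

open Finset Function SimpleGraph

section Sequences

variable {α : Type*} [DecidableEq α]

/-- `A 0, …, A n` has the running intersection property. -/
def IsRIPSeq (A : ℕ → Finset α) (n : ℕ) : Prop :=
  ∀ a ≤ n, 0 < a → ∃ b < a, ∀ c < a, A c ∩ A a ⊆ A b

/-- `C 0, …, C n` are the clusters of a `k`-th order cherry tree in which every `C a` with
`a > 0` is attached to an earlier cluster `C b`. -/
def IsCherrySeq (k : ℕ) (C : ℕ → Finset α) (n : ℕ) : Prop :=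
  ∀ a ≤ n, #(C a) = k ∧ (0 < a → ∃ b < a, #(C a ∩ C b) = k - 1 ∧ ∀ c < a, C c ∩ C a ⊆ C b)

lemma isRIPSeq_zero (A : ℕ → Finset α) : IsRIPSeq A 0 :=
  fun _ ha h0 => absurd ha (by omega)

lemma isCherrySeq_zero {k : ℕ} {C : ℕ → Finset α} (hC : #(C 0) = k) : IsCherrySeq k C 0 :=
  fun a ha => ⟨by rwa [Nat.le_zero.mp ha], fun h0 => absurd ha (by omega)⟩

lemma IsRIPSeq.snoc {A : ℕ → Finset α} {n b : ℕ} {X : Finset α} (hA : IsRIPSeq A n)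
    (hb : b ≤ n) (hX : ∀ c ≤ n, A c ∩ X ⊆ A b) : IsRIPSeq (update A (n + 1) X) (n + 1) := by
  intro a ha h0
  rcases Nat.le_succ_iff.mp ha with ha | rfl
  · obtain ⟨b', hb', hsub⟩ := hA a ha h0
    refine ⟨b', hb', fun c hc => ?_⟩
    rw [update_of_ne (by omega), update_of_ne (by omega), update_of_ne (by omega)]
    exact hsub c hc
  · refine ⟨b, by omega, fun c hc => ?_⟩
    rw [update_self, update_of_ne (by omega), update_of_ne (by omega)]
    exact hX c (by omega)

variable {k n : ℕ} {C : ℕ → Finset α}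

lemma IsCherrySeq.snoc {b : ℕ} {Q : Finset α} {u : α} (hC : IsCherrySeq k C n) (hb : b ≤ n)
    (hQ : Q ⊆ C b) (hQk : #Q + 1 = k) (hu : ∀ c ≤ n, u ∉ C c) :
    IsCherrySeq k (update C (n + 1) (insert u Q)) (n + 1) := by
  intro a ha
  rcases Nat.le_succ_iff.mp ha with ha | rfl
  · obtain ⟨hcard, hpar⟩ := hC a ha
    rw [update_of_ne (by omega)]
    refine ⟨hcard, fun h0 => ?_⟩
    obtain ⟨b', hb', hsep, hsub⟩ := hpar h0
    refine ⟨b', hb', ?_, fun c hc => ?_⟩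
    · rwa [update_of_ne (by omega)]
    · rw [update_of_ne (by omega), update_of_ne (by omega)]
      exact hsub c hc
  · have huQ : u ∉ Q := fun h => hu b hb (hQ h)
    rw [update_self]
    refine ⟨by rw [card_insert_of_notMem huQ, hQk], fun _ => ⟨b, by omega, ?_, fun c hc => ?_⟩⟩
    · rw [update_of_ne (by omega), insert_inter_of_notMem (hu b hb), inter_eq_left.mpr hQ]
      omega
    · rw [update_of_ne (by omega), update_of_ne (by omega)]
      intro v hv
      rw [mem_inter, mem_insert] at hv
      obtain ⟨hvc, rfl | hvQ⟩ := hv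
      · exact absurd hvc (hu c (by omega))
      · exact hQ hvQ

lemma IsCherrySeq.exists_parent (hC : IsCherrySeq k C n) :
    ∃ par : ℕ → ℕ, ∀ a ≤ n, 0 < a →
      par a < a ∧ #(C a ∩ C (par a)) = k - 1 ∧ ∀ c < a, C c ∩ C a ⊆ C (par a) := by
  have : ∀ a, ∃ b, a ≤ n → 0 < a →
      b < a ∧ #(C a ∩ C b) = k - 1 ∧ ∀ c < a, C c ∩ C a ⊆ C b := fun a => by
    by_cases ha : a ≤ n ∧ 0 < a
    · obtain ⟨b, hb⟩ := (hC a ha.1).2 ha.2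
      exact ⟨b, fun _ _ => hb⟩
    · exact ⟨0, fun h1 h2 => absurd ⟨h1, h2⟩ ha⟩
  choose par hpar using this
  exact ⟨par, hpar⟩

end Sequences

lemma exists_le_succ_update_eq_iff {β : Type*} (D : ℕ → β) (m : ℕ) (y x : β) :
    (∃ i ≤ m + 1, update D (m + 1) y i = x) ↔ (∃ i ≤ m, D i = x) ∨ y = x := by
  constructor
  · rintro ⟨i, hi, rfl⟩
    rcases Nat.le_succ_iff.mp hi with hi | rfl
    · exact .inl ⟨i, hi, (update_of_ne (by omega) _ _).symm⟩
    · exact .inr (update_self (m + 1) y D).symm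
  · rintro (⟨i, hi, rfl⟩ | rfl)
    · exact ⟨i, by omega, update_of_ne (by omega) _ _⟩
    · exact ⟨m + 1, le_rfl, update_self ..⟩

lemma SimpleGraph.Preconnected.exists_walk_forall_mem_support {β : Type*} {G : SimpleGraph β}
    (hG : G.Preconnected) (u : β) (s : Finset β) :
    ∃ (v : β) (p : G.Walk u v), ∀ x ∈ s, x ∈ p.support := by
  classical
  induction s using Finset.induction_on with
  | empty => exact ⟨u, .nil, by simp⟩
  | insert x s _ ih =>
    obtain ⟨v, p, hp⟩ := ih
    obtain ⟨q⟩ := hG v x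
    refine ⟨x, p.append q, ?_⟩
    simp only [mem_insert, forall_eq_or_imp, Walk.mem_support_append_iff]
    exact ⟨.inr q.end_mem_support, fun y hy => .inl (hp y hy)⟩

namespace JunctionTree

variable {V : Type} [DecidableEq V]

lemma inter_subset_of_adj (J : JunctionTree V) {x c t : J.ι} (hct : J.tree.Adj c t)
    (W : J.tree.Walk x c) (ht : t ∉ W.support) : J.K x ∩ J.K t ⊆ J.K c := by
  classical
  have ht' : t ∉ W.bypass.support := fun h => ht (W.support_bypass_subset_support h)
  exact J.junction x t c _ (W.bypass_isPath.concat ht' hct)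
    (W.bypass.support_subset_support_concat hct W.bypass.end_mem_support)

lemma exists_ripSeq_of_walk (J : JunctionTree V) {base c e : J.ι} (w : J.tree.Walk c e)
    (W : J.tree.Walk base c) (D : ℕ → J.ι) (m : ℕ) (hW : ∀ x, x ∈ W.support ↔ ∃ i ≤ m, D i = x)
    (hD : IsRIPSeq (J.K ∘ D) m) :
    ∃ (D' : ℕ → J.ι) (m' : ℕ), IsRIPSeq (J.K ∘ D') m' ∧
      ∀ x ∈ (W.append w).support, ∃ i ≤ m', D' i = x := by
  classical
  induction w generalizing D m with
  | nil => exact ⟨D, m, hD, fun x hx => (hW x).mp (by simpa using hx)⟩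
  | @cons c t e h w ih =>
    rw [← Walk.concat_append]
    have hconcat : ∀ x, x ∈ (W.concat h).support ↔ x ∈ W.support ∨ t = x := by
      simp [Walk.support_concat, eq_comm]
    by_cases ht : t ∈ W.support
    · refine ih (W.concat h) D m (fun x => ?_) hD
      rw [hconcat, ← hW]
      exact ⟨fun hx => hx.elim id (· ▸ ht), .inl⟩
    · obtain ⟨j, hj, hDj⟩ := (hW c).mp W.end_mem_support
      refine ih (W.concat h) (update D (m + 1) t) (m + 1)
        (fun x => by rw [hconcat, hW, exists_le_succ_update_eq_iff]) ?_
      rw [comp_update]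
      refine hD.snoc hj fun i hi => ?_
      have hDi : D i ∈ W.support := (hW _).mpr ⟨i, hi, rfl⟩
      simpa [hDj] using J.inter_subset_of_adj h (W.dropUntil _ hDi)
        fun h' => ht (W.support_dropUntil_subset_support hDi h')

lemma exists_ripSeq (J : JunctionTree V) :
    ∃ (D : ℕ → J.ι) (m : ℕ), IsRIPSeq (J.K ∘ D) m ∧ ∀ t, ∃ i ≤ m, D i = t := by
  have := J.fin
  obtain ⟨base⟩ := J.isTree.connected.nonempty
  obtain ⟨e, w, hw⟩ :=
    J.isTree.connected.preconnected.exists_walk_forall_mem_support base Finset.univ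
  obtain ⟨D, m, hD, hcov⟩ :=
    J.exists_ripSeq_of_walk w .nil (fun _ => base) 0 (by simp [eq_comm]) (isRIPSeq_zero _)
  exact ⟨D, m, hD, fun t => hcov t (by simpa using hw t (mem_univ t))⟩

end JunctionTree

section Cons

variable {α : Type*} [DecidableEq α]

lemma exists_card_eq_forall_lt_mem [Fintype α] (f : α → ℕ) {j : ℕ} (hj : j ≤ Fintype.card α) :
    ∃ R : Finset α, #R = j ∧ ∀ u ∈ R, ∀ v, f v < f u → v ∈ R := by
  induction j with
  | zero => exact ⟨∅, card_empty, by simp⟩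
  | succ j ih =>
    obtain ⟨R, hRj, hR⟩ := ih (by omega)
    have hne : (univ \ R).Nonempty := by
      rw [← card_pos, card_sdiff_of_subset (subset_univ R), card_univ]
      omega
    obtain ⟨u, hu, humin⟩ := exists_min_image (univ \ R) f hne
    have huR : u ∉ R := (mem_sdiff.mp hu).2
    refine ⟨insert u R, by rw [card_insert_of_notMem huR, hRj], ?_⟩
    simp only [mem_insert, forall_eq_or_imp]
    refine ⟨fun v hv => ?_, fun w hw v hv => .inr (hR w hw v hv)⟩
    by_contra! hvR
    exact absurd (humin v (by simp [hvR.2])) (by omega)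

lemma IsRIPSeq.cons {A : ℕ → Finset α} {m : ℕ} (hA : IsRIPSeq A m) (R : Finset α)
    (hR : ∀ i ≤ m, ∀ u ∈ A i ∩ R, (∀ j < i, u ∉ A j) → ∀ j < i, A j ⊆ R) :
    IsRIPSeq (fun | 0 => R | i + 1 => A i) (m + 1) := by
  rintro (_ | i) hi h0
  · exact absurd h0 (lt_irrefl 0)
  rcases i.eq_zero_or_pos with rfl | hi0
  · refine ⟨0, h0, fun c hc => ?_⟩
    obtain rfl : c = 0 := by omega
    exact inter_subset_left
  by_cases hnew : ∃ u ∈ A i ∩ R, ∀ j < i, u ∉ A j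
  · obtain ⟨u, hu, hfirst⟩ := hnew
    refine ⟨0, by omega, fun c hc => ?_⟩
    rcases c with _ | j
    · exact inter_subset_left
    · exact inter_subset_left.trans (hR i (by omega) u hu hfirst j (by omega))
  · push Not at hnew
    obtain ⟨b, hb, hsub⟩ := hA i (by omega) hi0
    refine ⟨b + 1, by omega, fun c hc => ?_⟩
    rcases c with _ | j
    · intro v hv
      obtain ⟨j, hj, hvj⟩ := hnew v (by simpa [and_comm] using hv)
      exact hsub j hj (mem_inter.mpr ⟨hvj, (mem_inter.mp hv).2⟩)
    · exact hsub j (by omega)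

lemma IsRIPSeq.exists_cons_card_eq [Fintype α] {A : ℕ → Finset α} {m k : ℕ}
    (hA : IsRIPSeq A m) (hcov : ∀ v, ∃ i, v ∈ A i) (hk : k ≤ Fintype.card α) :
    ∃ R : Finset α, #R = k ∧ IsRIPSeq (fun | 0 => R | i + 1 => A i) (m + 1) := by
  classical
  let first (v : α) : ℕ := Nat.find (hcov v)
  obtain ⟨R, hRk, hR⟩ := exists_card_eq_forall_lt_mem first hk
  refine ⟨R, hRk, hA.cons R fun i _ u hu hfirst j hj v hv => hR u (mem_inter.mp hu).2 v ?_⟩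
  have hu_first : i ≤ first u := by
    by_contra! h
    exact hfirst _ h (Nat.find_spec (hcov u))
  have hv_first : first v ≤ j := Nat.find_min' (hcov v) hv
  omega

end Cons

section Extend

variable {α : Type*} [DecidableEq α] {k : ℕ}

lemma IsCherrySeq.exists_extend {C : ℕ → Finset α} {n b : ℕ} {P Y : Finset α}
    (hC : IsCherrySeq k C n) (F : Finset α) (hb : b ≤ n) (hP : P ⊆ C b) (hcard : #P + #F ≤ k)
    (hfresh : ∀ u ∈ F, ∀ c ≤ n, u ∉ C c) (hCY : ∀ c ≤ n, C c ⊆ Y) (hFY : F ⊆ Y) :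
    ∃ (C' : ℕ → Finset α) (n' : ℕ), IsCherrySeq k C' n' ∧ n ≤ n' ∧
      (∀ a ≤ n, C' a = C a) ∧ (∃ a ≤ n', P ∪ F ⊆ C' a) ∧ ∀ a ≤ n', C' a ⊆ Y := by
  induction F using Finset.induction_on generalizing C n b P with
  | empty => exact ⟨C, n, hC, le_rfl, fun _ _ => rfl, ⟨b, hb, by simpa using hP⟩, hCY⟩
  | @insert u F huF ih =>
    rw [card_insert_of_notMem huF] at hcard
    obtain ⟨Q, hPQ, hQC, hQ⟩ := exists_subsuperset_card_eq hP (n := k - 1) (by omega)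
      (by rw [(hC b hb).1]; omega)
    have hu : ∀ c ≤ n, u ∉ C c := hfresh u (mem_insert_self u F)
    set C₁ := update C (n + 1) (insert u Q)
    have hC₁ : ∀ c ≤ n, C₁ c = C c := fun c hc => update_of_ne (by omega) _ _
    have hC₁top : C₁ (n + 1) = insert u Q := update_self ..
    have hcard₁ : #(insert u P) + #F ≤ k := by
      have := card_insert_le u P
      omega
    obtain ⟨C', n', hC', hn', hold, ⟨a, ha, hPF⟩, hY⟩ :=
      ih (C := C₁) (P := insert u P) (hC.snoc hb hQC (by omega) hu) le_rfl
        (hC₁top ▸ insert_subset_insert u hPQ) hcard₁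
        (fun v hv c hc => by
          rcases Nat.le_succ_iff.mp hc with hc | rfl
          · rw [hC₁ c hc]; exact hfresh v (mem_insert_of_mem hv) c hc
          · rw [hC₁top, mem_insert]
            rintro (rfl | hvQ)
            · exact huF hv
            · exact hfresh v (mem_insert_of_mem hv) b hb (hQC hvQ))
        (fun c hc => by
          rcases Nat.le_succ_iff.mp hc with hc | rfl
          · rw [hC₁ c hc]; exact hCY c hc
          · rw [hC₁top]
            exact insert_subset (hFY (mem_insert_self u F)) (hQC.trans (hCY b hb)))
        ((subset_insert u F).trans hFY)
    refine ⟨C', n', hC', by omega, fun c hc => by rw [hold c (by omega), hC₁ c hc], ⟨a, ha, ?_⟩,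
      hY⟩
    rwa [insert_union, ← union_insert] at hPF

lemma IsRIPSeq.exists_cherrySeq {A : ℕ → Finset α} {m : ℕ} (hA : IsRIPSeq A m)
    (h0 : #(A 0) = k) (hk : ∀ i ≤ m, #(A i) ≤ k) :
    ∃ (C : ℕ → Finset α) (n : ℕ), IsCherrySeq k C n ∧ ∀ i ≤ m, ∃ a ≤ n, A i ⊆ C a := by
  suffices ∀ i ≤ m, ∃ (C : ℕ → Finset α) (n : ℕ), IsCherrySeq k C n ∧
      (∀ a ≤ n, C a ⊆ (range (i + 1)).biUnion A) ∧ ∀ j ≤ i, ∃ a ≤ n, A j ⊆ C a by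
    obtain ⟨C, n, hC, -, hAC⟩ := this m le_rfl
    exact ⟨C, n, hC, hAC⟩
  intro i
  induction i with
  | zero =>
    intro _
    refine ⟨fun _ => A 0, 0, isCherrySeq_zero h0, fun _ _ => ?_, fun j hj => ⟨0, le_rfl, ?_⟩⟩
    · exact subset_biUnion_of_mem A (mem_range.mpr zero_lt_one)
    · rw [Nat.le_zero.mp hj]
  | succ i ih =>
    intro hi
    obtain ⟨C, n, hC, hCW, hAC⟩ := ih (by omega)
    obtain ⟨b, hb, hrip⟩ := hA (i + 1) hi (by omega)
    obtain ⟨a₀, ha₀, hAb⟩ := hAC b (by omega)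
    set W := (range (i + 1)).biUnion A
    have hP : A (i + 1) ∩ W ⊆ C a₀ := by
      intro v hv
      obtain ⟨hvA, hvW⟩ := mem_inter.mp hv
      obtain ⟨c, hc, hvc⟩ := mem_biUnion.mp hvW
      exact hAb (hrip c (mem_range.mp hc) (mem_inter.mpr ⟨hvc, hvA⟩))
    have hW : W ⊆ (range (i + 2)).biUnion A :=
      biUnion_subset_biUnion_of_subset_left A (range_subset_range.mpr (by omega))
    have hAi : A (i + 1) ⊆ (range (i + 2)).biUnion A :=
      subset_biUnion_of_mem A (mem_range.mpr (by omega))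
    obtain ⟨C', n', hC', hnn', hold, ⟨a, ha, hsub⟩, hCW'⟩ :=
      hC.exists_extend (A (i + 1) \ W) ha₀ hP
        (by rw [card_inter_add_card_sdiff]; exact hk _ hi)
        (fun u hu c hc huc => (mem_sdiff.mp hu).2 (hCW c hc huc))
        (fun c hc => (hCW c hc).trans hW) (sdiff_subset.trans hAi)
    refine ⟨C', n', hC', hCW', fun j hj => ?_⟩
    rcases Nat.le_succ_iff.mp hj with hj | rfl
    · obtain ⟨a, ha, hsub⟩ := hAC j hj
      exact ⟨a, by omega, by rwa [hold a ha]⟩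
    · exact ⟨a, ha, by rwa [← inf_eq_inter, ← sup_eq_union, sup_inf_sdiff] at hsub⟩

end Extend

def parentGraph (par : ℕ → ℕ) (n : ℕ) : SimpleGraph (Fin (n + 1)) :=
  fromRel fun a b => 0 < (a : ℕ) ∧ (b : ℕ) = par a

section ParentGraph

variable {par : ℕ → ℕ} {n : ℕ}

lemma parentGraph_adj_of_eq_par (hpar : ∀ a ≤ n, 0 < a → par a < a) {a b : Fin (n + 1)}
    (ha : 0 < (a : ℕ)) (hb : (b : ℕ) = par a) : (parentGraph par n).Adj a b := by
  have := hpar a (Nat.lt_succ_iff.mp a.isLt) ha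
  refine (fromRel_adj _ _ _).mpr ⟨fun h => ?_, .inl ⟨ha, hb⟩⟩
  subst h
  omega

lemma parentGraph_eq_par_of_adj (hpar : ∀ a ≤ n, 0 < a → par a < a) {a b : Fin (n + 1)}
    (hab : (parentGraph par n).Adj a b) (hba : (b : ℕ) < a) : (b : ℕ) = par a := by
  rcases ((fromRel_adj _ _ _).mp hab).2 with ⟨-, h⟩ | ⟨hb, h⟩
  · exact h
  · have := hpar b (Nat.lt_succ_iff.mp b.isLt) hb
    omega

lemma parentGraph_exists_walk (hpar : ∀ a ≤ n, 0 < a → par a < a) {P : ℕ → Prop}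
    (hP : ∀ a ≤ n, ∀ b < a, P a → P b → P (par a)) (a b : Fin (n + 1)) (ha : P a) (hb : P b) :
    ∃ w : (parentGraph par n).Walk a b, ∀ x ∈ w.support, P x := by
  induction hs : (a : ℕ) + b using Nat.strong_induction_on generalizing a b with
  | _ s ih =>
  wlog hba : (b : ℕ) < a generalizing a b
  · rcases (not_lt.mp hba).eq_or_lt with hab | hab
    · obtain rfl : a = b := Fin.ext hab
      exact ⟨.nil, by simpa using ha⟩
    · obtain ⟨w, hw⟩ := this b a hb ha (by omega) hab
      exact ⟨w.reverse, by simpa using hw⟩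
  have haN : (a : ℕ) ≤ n := Nat.lt_succ_iff.mp a.isLt
  have hlt := hpar a haN (by omega)
  obtain ⟨w, hw⟩ := ih (par a + b) (by omega) ⟨par a, by omega⟩ b (hP a haN b hba ha hb) hb rfl
  refine ⟨.cons (parentGraph_adj_of_eq_par hpar (by omega) rfl) w, ?_⟩
  simp only [Walk.support_cons, List.mem_cons, forall_eq_or_imp]
  exact ⟨ha, hw⟩

lemma parentGraph_isAcyclic (hpar : ∀ a ≤ n, 0 < a → par a < a) :
    (parentGraph par n).IsAcyclic := by
  classical
  intro v c hc
  obtain ⟨M, hM, hmax⟩ := c.support.toFinset.exists_max_image id ⟨v, by simp⟩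
  rw [List.mem_toFinset] at hM
  have hd : (c.rotate M hM).IsCycle := (Walk.isCycle_rotate hM).mpr hc
  -- both cycle neighbours of the largest vertex `M` are smaller, hence equal to its parent
  have hpar_of_mem : ∀ x ∈ (c.rotate M hM).support, (parentGraph par n).Adj M x →
      (x : ℕ) = par M := by
    intro x hx hadj
    have hle : x ≤ M := hmax x (List.mem_toFinset.mpr ((c.mem_support_rotate_iff M hM).mp hx))
    exact parentGraph_eq_par_of_adj hpar hadj (lt_of_le_of_ne hle (Fin.val_ne_iff.mpr hadj.ne'))
  apply hd.snd_ne_penultimate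
  apply Fin.ext
  rw [hpar_of_mem _ (Walk.getVert_mem_support _ 1) (Walk.adj_snd hd.not_nil),
    hpar_of_mem _ (Walk.getVert_mem_support _ _) (Walk.adj_penultimate hd.not_nil).symm]

lemma parentGraph_isTree (hpar : ∀ a ≤ n, 0 < a → par a < a) : (parentGraph par n).IsTree := by
  refine ⟨⟨fun a b => ?_⟩, parentGraph_isAcyclic hpar⟩
  obtain ⟨w, -⟩ := parentGraph_exists_walk hpar (P := fun _ => True) (by simp) a b trivial trivial
  exact w.reachable

end ParentGraph

lemma SimpleGraph.IsAcyclic.support_subset_of_isPath {β : Type*} {G : SimpleGraph β}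
    (hG : G.IsAcyclic) {u v : β} {p : G.Walk u v} (hp : p.IsPath) (q : G.Walk u v) :
    p.support ⊆ q.support := by
  classical
  have : p = q.bypass := congrArg Subtype.val <|
    (hG.subsingleton_path u v).elim ⟨p, hp⟩ ⟨q.bypass, q.bypass_isPath⟩
  exact this ▸ q.support_bypass_subset_support

namespace JunctionTree

variable {V : Type} [DecidableEq V]

def ofParent (C : ℕ → Finset V) (par : ℕ → ℕ) (n : ℕ)
    (hpar : ∀ a ≤ n, 0 < a → par a < a ∧ ∀ b < a, C b ∩ C a ⊆ C (par a))
    (hcov : ∀ v, ∃ a ≤ n, v ∈ C a) : JunctionTree V where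
  ι := Fin (n + 1)
  fin := inferInstance
  tree := parentGraph par n
  isTree := parentGraph_isTree fun a ha h0 => (hpar a ha h0).1
  K a := C a
  covers v := by
    obtain ⟨a, ha, hv⟩ := hcov v
    exact ⟨⟨a, Nat.lt_succ_of_le ha⟩, hv⟩
  junction s t u p hp hu v hv := by
    rw [mem_inter] at hv
    obtain ⟨w, hw⟩ := parentGraph_exists_walk (fun a ha h0 => (hpar a ha h0).1)
      (P := fun a => v ∈ C a)
      (fun a ha b hba hva hvb => (hpar a ha (by omega)).2 b hba (mem_inter.mpr ⟨hvb, hva⟩))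
      s t hv.1 hv.2
    exact hw u ((parentGraph_isAcyclic fun a ha h0 => (hpar a ha h0).1).support_subset_of_isPath
      hp w hu)

lemma ofParent_isCherry {k : ℕ} {C : ℕ → Finset V} {par : ℕ → ℕ} {n : ℕ}
    (hpar : ∀ a ≤ n, 0 < a → par a < a ∧ ∀ b < a, C b ∩ C a ⊆ C (par a))
    (hcov : ∀ v, ∃ a ≤ n, v ∈ C a) (hcard : ∀ a ≤ n, #(C a) = k)
    (hsep : ∀ a ≤ n, 0 < a → #(C a ∩ C (par a)) = k - 1) :
    (ofParent C par n hpar hcov).IsCherry k := by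
  refine ⟨fun a : Fin (n + 1) => hcard a (Nat.lt_succ_iff.mp a.isLt), ?_⟩
  refine Sym2.ind fun (a b : Fin (n + 1)) (hab : (parentGraph par n).Adj a b) => ?_
  change #(C a ∩ C b) = k - 1
  rcases ((fromRel_adj _ _ _).mp hab).2 with ⟨ha, hb⟩ | ⟨hb, ha⟩
  · rw [hb]
    exact hsep a (Nat.lt_succ_iff.mp a.isLt) ha
  · rw [ha, inter_comm]
    exact hsep b (Nat.lt_succ_iff.mp b.isLt) hb

end JunctionTree

/-- structural core of the transformation of a `k`-width junction
tree into a `k`-th order cherry tree. Let `J` be a junction tree on a finite vertex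
set `V` in which every cluster has at most `k` elements, and suppose `|V| ≥ k`. Then
there exists a `k`-th order cherry tree `J'` on `V` such that every cluster of `J`
is contained in some cluster of `J'`. -/
theorem junctionTree_to_cherryTree {V : Type} [Fintype V] [DecidableEq V]
    (k : ℕ) (J : JunctionTree V)
    (hwidth : ∀ t : J.ι, (J.K t).card ≤ k)
    (hV : k ≤ Fintype.card V) :
    ∃ J' : JunctionTree V, J'.IsCherry k ∧
      ∀ t : J.ι, ∃ t' : J'.ι, J.K t ⊆ J'.K t' := by
  obtain ⟨D, m, hD, hD_surj⟩ := J.exists_ripSeq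
  have hcov : ∀ v, ∃ i, v ∈ J.K (D i) := fun v => by
    obtain ⟨t, hv⟩ := J.covers v
    obtain ⟨i, -, rfl⟩ := hD_surj t
    exact ⟨i, hv⟩
  obtain ⟨R, hR, hRD⟩ := hD.exists_cons_card_eq hcov hV
  obtain ⟨C, n, hC, hRD_C⟩ :=
    hRD.exists_cherrySeq hR (by rintro (_ | i) -; exacts [hR.le, hwidth (D i)])
  have hJC : ∀ t, ∃ a ≤ n, J.K t ⊆ C a := fun t => by
    obtain ⟨i, hi, rfl⟩ := hD_surj t
    exact hRD_C (i + 1) (by omega)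
  have hcovC : ∀ v, ∃ a ≤ n, v ∈ C a := fun v => by
    obtain ⟨t, hv⟩ := J.covers v
    obtain ⟨a, ha, hsub⟩ := hJC t
    exact ⟨a, ha, hsub hv⟩
  obtain ⟨par, hpar⟩ := hC.exists_parent
  refine ⟨.ofParent C par n (fun a ha h0 => ⟨(hpar a ha h0).1, (hpar a ha h0).2.2⟩) hcovC,
    JunctionTree.ofParent_isCherry _ _ (fun a ha => (hC a ha).1)
      (fun a ha h0 => (hpar a ha h0).2.1), fun t => ?_⟩
  obtain ⟨a, ha, hsub⟩ := hJC t
  exact ⟨⟨a, Nat.lt_succ_of_le ha⟩, hsub⟩
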